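/- arXiv:2103.03343 — 6 statements merged into one kernel-verified Lean document; each statement's English description precedes it below -/
import Mathlib

section
/- Let X be a nonempty set, α ∈ (0,1), and T : X → X a map with exactly one fixed point x̄. If there is a function φ : X → ℝ≥0 with φ⁻¹({0}) = {x̄} and φ(T(x)) ≤ α·φ(x) for all x ∈ X, then there exists a complete metric d on X such that d(T(x),T(y)) ≤ α·d(x,y) for all x, y ∈ X. -/
open Classical in
noncomputable def myDist {X : Type*} (φ : X → NNReal) (x y : X) : ℝ :=
  if x = y then 0 else (φ x : ℝ) + (φ y : ℝ)

theorem stmt_1 {X : Type*} [Nonempty X] (T : X → X) (xbar : X)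
    (hfix : ∀ x : X, T x = x ↔ x = xbar)
    (α : ℝ) (hα : α ∈ Set.Ioo (0 : ℝ) 1)
    (φ : X → NNReal) (hφ : φ ⁻¹' {0} = {xbar})
    (hcontr : ∀ x : X, (φ (T x) : ℝ) ≤ α * (φ x : ℝ)) :
    ∃ d : MetricSpace X, @CompleteSpace X d.toUniformSpace ∧
      ∀ x y : X, d.dist (T x) (T y) ≤ α * d.dist x y := by
  classical
  obtain ⟨hα0, hα1⟩ := hα
  have hφ0 : ∀ x : X, φ x = 0 ↔ x = xbar := by
    intro x
    constructor
    · intro h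
      have : x ∈ φ ⁻¹' {0} := h
      rwa [hφ] at this
    · intro h
      have hmem : xbar ∈ ({xbar} : Set X) := rfl
      rw [← hφ] at hmem
      rw [h]; exact hmem
  have hnn : ∀ x, (0:ℝ) ≤ (φ x : ℝ) := fun x => (φ x).coe_nonneg
  have hdnn : ∀ x y : X, (0:ℝ) ≤ myDist φ x y := by
    intro x y; unfold myDist; split
    · exact le_refl _
    · exact add_nonneg (hnn x) (hnn y)
  have hself : ∀ x : X, myDist φ x x = 0 := by
    intro x; simp [myDist]
  have hcomm : ∀ x y : X, myDist φ x y = myDist φ y x := by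
    intro x y; unfold myDist
    by_cases h : x = y
    · simp [h]
    · rw [if_neg h, if_neg (Ne.symm h), add_comm]
  have htri : ∀ x y z : X, myDist φ x z ≤ myDist φ x y + myDist φ y z := by
    intro x y z; unfold myDist
    by_cases hxz : x = z
    · rw [if_pos hxz]; exact add_nonneg (hdnn x y) (hdnn y z)
    · rw [if_neg hxz]
      by_cases hxy : x = y
      · subst hxy; rw [if_pos rfl, if_neg hxz, zero_add]
      · by_cases hyz : y = z
        · subst hyz; rw [if_neg hxy, if_pos rfl, add_zero]
        · rw [if_neg hxy, if_neg hyz]; linarith [hnn y]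
  have heq : ∀ x y : X, myDist φ x y = 0 → x = y := by
    intro x y h
    by_contra hne
    rw [myDist, if_neg hne] at h
    have hx : (φ x : ℝ) = 0 := by linarith [hnn x, hnn y]
    have hy : (φ y : ℝ) = 0 := by linarith [hnn x, hnn y]
    have hx' : x = xbar := (hφ0 x).mp (by exact_mod_cast hx)
    have hy' : y = xbar := (hφ0 y).mp (by exact_mod_cast hy)
    exact hne (hx'.trans hy'.symm)
  set d : MetricSpace X :=
    { dist := myDist φ
      dist_self := hself
      dist_comm := hcomm
      dist_triangle := htri
      eq_of_dist_eq_zero := fun {x y} h => heq x y h } with hd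
  refine ⟨d, ?_, ?_⟩
  · -- completeness
    letI := d
    have hdist : ∀ x y : X, dist x y = myDist φ x y := fun _ _ => rfl
    apply Metric.complete_of_cauchySeq_tendsto
    intro u hu
    by_cases hc : ∃ N : ℕ, ∀ m ≥ N, ∀ n ≥ N, u m = u n
    · obtain ⟨N, hN⟩ := hc
      refine ⟨u N, ?_⟩
      apply Filter.Tendsto.congr' (f₁ := fun _ => u N)
      · filter_upwards [Filter.eventually_ge_atTop N] with n hn
        exact hN N le_rfl n hn
      · exact tendsto_const_nhds
    · push_neg at hc
      refine ⟨xbar, ?_⟩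
      rw [Metric.tendsto_atTop]
      intro ε hε
      obtain ⟨N, hN⟩ := Metric.cauchySeq_iff.mp hu ε hε
      refine ⟨N, fun n hn => ?_⟩
      obtain ⟨m1, hm1, m2, hm2, hne⟩ := hc N
      have key : (φ (u n) : ℝ) < ε := by
        rcases eq_or_ne (u n) (u m1) with h1 | h1
        · have hne2 : u n ≠ u m2 := h1 ▸ hne
          have := hN n hn m2 hm2
          rw [hdist, myDist, if_neg hne2] at this
          linarith [hnn (u m2)]
        · have := hN n hn m1 hm1
          rw [hdist, myDist, if_neg h1] at this
          linarith [hnn (u m1)]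
      rw [hdist, myDist]
      split
      · exact hε
      · have : (φ xbar : ℝ) = 0 := by
          exact_mod_cast (hφ0 xbar).mpr rfl
        linarith
  · -- contraction
    intro x y
    show myDist φ (T x) (T y) ≤ α * myDist φ x y
    by_cases hT : T x = T y
    · rw [myDist, if_pos hT]
      exact mul_nonneg (le_of_lt hα0) (hdnn x y)
    · have hxy : x ≠ y := fun h => hT (by rw [h])
      rw [myDist, if_neg hT, myDist, if_neg hxy, mul_add]
      exact add_le_add (hcontr x) (hcontr y)
end

section
/- Let X be a nonempty set and T : X → X a map whose set A of fixed points is nonempty of cardinality at most continuum, and such that x ≠ Tⁿ(x) for all n ≥ 1 and all x ∉ A. Then for each α ∈ (0,1) there exists a partial metric p on X such that (X,p) is 0-complete and p(T(x),T(y)) ≤ max{α·p(x,y), p(x,x), p(y,y)} for all x, y ∈ X. -/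
open Filter Topology

/-- `p` is a partial metric on `X`. -/
def IsPartialMetric {X : Type*} (p : X → X → ℝ) : Prop :=
  (∀ x y : X, 0 ≤ p x y) ∧
  (∀ x y : X, x = y ↔ (p x x = p x y ∧ p x y = p y y)) ∧
  (∀ x y : X, p x x ≤ p y x) ∧
  (∀ x y : X, p x y = p y x) ∧
  (∀ x y z : X, p x y ≤ p x z + p z y - p z z)

/-- The sequence `u` is Cauchy with limit `a` in the partial metric `p`:
`lim_{m,n → ∞} p (u m) (u n) = a`. -/
def PMCauchyTo {X : Type*} (p : X → X → ℝ) (u : ℕ → X) (a : ℝ) : Prop :=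
  Tendsto (fun mn : ℕ × ℕ => p (u mn.1) (u mn.2)) atTop (𝓝 a)

/-- The sequence `u` properly converges to `x` in the partial metric `p`. -/
def PMProperConv {X : Type*} (p : X → X → ℝ) (u : ℕ → X) (x : X) : Prop :=
  Tendsto (fun n => p (u n) x) atTop (𝓝 (p x x)) ∧
  Tendsto (fun n => p (u n) (u n)) atTop (𝓝 (p x x))

/-- The partial metric space `(X, p)` is complete: every Cauchy sequence
properly converges. -/
def PMComplete {X : Type*} (p : X → X → ℝ) : Prop :=
  ∀ (u : ℕ → X) (a : ℝ), PMCauchyTo p u a → ∃ x : X, PMProperConv p u x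

/-- The partial metric space `(X, p)` is `0`-complete: every Cauchy sequence with
`lim_{m,n} p (u m) (u n) = 0` properly converges. -/
def PMZeroComplete {X : Type*} (p : X → X → ℝ) : Prop :=
  ∀ u : ℕ → X, PMCauchyTo p u 0 → ∃ x : X, PMProperConv p u x

namespace Stmt13

attribute [local instance] Classical.propDecidable

variable {X : Type*} (T : X → X)

/-- points whose orbit reaches a fixed point -/
def Ev (x : X) : Prop := ∃ n : ℕ, T (T^[n] x) = T^[n] x

lemma ev_T {x : X} (h : Ev T x) : Ev T (T x) := by
  obtain ⟨n, hn⟩ := h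
  refine ⟨n, ?_⟩
  rw [← Function.iterate_succ_apply, Function.iterate_succ_apply', hn]
  exact hn

lemma not_ev_T {x : X} (h : ¬ Ev T x) : ¬ Ev T (T x) := by
  rintro ⟨n, hn⟩
  exact h ⟨n + 1, by rwa [Function.iterate_succ_apply]⟩

lemma iter_inj (hper : ∀ x : X, T x ≠ x → ∀ n : ℕ, 1 ≤ n → T^[n] x ≠ x)
    {x : X} (hx : ¬ Ev T x) : ∀ {a b : ℕ}, T^[a] x = T^[b] x → a = b := by
  have key : ∀ a b : ℕ, a < b → T^[a] x = T^[b] x → False := by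
    intro a b hab h
    have hz : T^[b - a] (T^[a] x) = T^[a] x := by
      rw [← Function.iterate_add_apply]
      rw [Nat.sub_add_cancel hab.le] at *
      exact h.symm
    have hTz : T (T^[a] x) ≠ T^[a] x := fun hc => hx ⟨a, hc⟩
    exact hper _ hTz (b - a) (by omega) hz
  intro a b h
  rcases lt_trichotomy a b with hlt | heq | hlt
  · exact absurd (key a b hlt h) (fun f => f)
  · exact heq
  · exact absurd (key b a hlt h.symm) (fun f => f)

def orel (x y : X) : Prop := ∃ m n : ℕ, T^[m] x = T^[n] y

lemma orel_trans {x y z : X} (h1 : orel T x y) (h2 : orel T y z) : orel T x z := by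
  obtain ⟨m, n, h1⟩ := h1
  obtain ⟨p, q, h2⟩ := h2
  refine ⟨p + m, n + q, ?_⟩
  rw [Function.iterate_add_apply, h1, ← Function.iterate_add_apply, Nat.add_comm p n,
    Function.iterate_add_apply, h2, ← Function.iterate_add_apply]

def osetoid : Setoid X where
  r := orel T
  iseqv := ⟨fun x => ⟨0, 0, rfl⟩, fun ⟨m, n, h⟩ => ⟨n, m, h.symm⟩,
    fun h1 h2 => orel_trans T h1 h2⟩

noncomputable def rep (x : X) : X := (Quotient.mk (osetoid T) x).out

lemma rep_spec (x : X) : orel T (rep T x) x := Quotient.mk_out (s := osetoid T) x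

lemma rep_eq_of_rel {x y : X} (h : orel T x y) : rep T x = rep T y := by
  unfold rep
  rw [Quotient.sound (s := osetoid T) h]

lemma ev_of_orel {x y : X} (h : orel T x y) (hx : Ev T x) : Ev T y := by
  obtain ⟨p, q, hpq⟩ := h
  obtain ⟨n, hn⟩ := hx
  refine ⟨n + q, ?_⟩
  have h1 : T^[n + p] x = T^[n + q] y := by
    rw [Function.iterate_add_apply, hpq, ← Function.iterate_add_apply]
  have h2 : T^[n + p] x = T^[n] x := by
    rw [Nat.add_comm, Function.iterate_add_apply]
    exact Function.iterate_fixed hn p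
  rw [← h1, h2]
  exact hn

noncomputable def nu (x : X) : ℤ :=
  ((rep_spec T x).choose : ℤ) - ((rep_spec T x).choose_spec.choose : ℤ)

lemma nu_T (hper : ∀ x : X, T x ≠ x → ∀ n : ℕ, 1 ≤ n → T^[n] x ≠ x)
    {x : X} (hx : ¬ Ev T x) : nu T (T x) = nu T x + 1 := by
  have hrep : rep T (T x) = rep T x :=
    rep_eq_of_rel T ⟨0, 1, by simp⟩
  have hr : ¬ Ev T (rep T x) := fun h => hx (ev_of_orel T (rep_spec T x) h)
  set p := (rep_spec T x).choose with hp
  set q := (rep_spec T x).choose_spec.choose with hq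
  have hpq : T^[p] (rep T x) = T^[q] x := (rep_spec T x).choose_spec.choose_spec
  set p' := (rep_spec T (T x)).choose with hp'
  set q' := (rep_spec T (T x)).choose_spec.choose with hq'
  have hp'q' : T^[p'] (rep T (T x)) = T^[q'] (T x) :=
    (rep_spec T (T x)).choose_spec.choose_spec
  rw [hrep, ← Function.iterate_succ_apply] at hp'q'
  -- hp'q' : T^[p'] (rep T x) = T^[q' + 1] x
  have e1 : T^[q' + 1 + p] (rep T x) = T^[q' + 1 + q] x := by
    rw [Function.iterate_add_apply, hpq, ← Function.iterate_add_apply]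
  have e2 : T^[q + p'] (rep T x) = T^[q + (q' + 1)] x := by
    rw [Function.iterate_add_apply, hp'q', ← Function.iterate_add_apply]
  have e3 : T^[q' + 1 + p] (rep T x) = T^[q + p'] (rep T x) := by
    rw [e1, e2]
    congr 1
    omega
  have := iter_inj T hper hr e3
  have g1 : nu T (T x) = (p' : ℤ) - q' := rfl
  have g2 : nu T x = (p : ℤ) - q := rfl
  rw [g1, g2]
  omega

noncomputable def hf (α : ℝ) (x : X) : ℝ :=
  if hx : Ev T x then α ^ (-(Nat.find hx : ℤ)) else α ^ (nu T x)

lemma hf_pos {α : ℝ} (h0 : 0 < α) (x : X) : 0 < hf T α x := by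
  unfold hf
  split <;> exact zpow_pos h0 _

lemma hf_T (hper : ∀ x : X, T x ≠ x → ∀ n : ℕ, 1 ≤ n → T^[n] x ≠ x)
    {α : ℝ} (h0 : 0 < α) (h1 : α < 1) {x : X} (hx : T (T x) ≠ T x) :
    hf T α (T x) ≤ α * hf T α x := by
  have hxf : T x ≠ x := fun h => hx (by rw [h]; exact h)
  by_cases hE : Ev T x
  · have hE' : Ev T (T x) := ev_T T hE
    have hk1 : 1 ≤ Nat.find hE := by
      rcases Nat.eq_zero_or_pos (Nat.find hE) with h | h
      · exact absurd (by simpa [h] using Nat.find_spec hE) hxf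
      · exact h
    have hkle : Nat.find hE' ≤ Nat.find hE - 1 := by
      apply Nat.find_le
      rw [← Function.iterate_succ_apply, Nat.succ_eq_add_one, Nat.sub_add_cancel hk1]
      exact Nat.find_spec hE
    rw [hf, hf, dif_pos hE, dif_pos hE']
    have step : α ^ (-(Nat.find hE' : ℤ)) ≤ α ^ (-((Nat.find hE : ℤ) - 1)) := by
      apply zpow_right_anti₀ h0 h1.le
      omega
    refine step.trans ?_
    rw [show -((Nat.find hE : ℤ) - 1) = (-(Nat.find hE : ℤ)) + 1 by ring,
      zpow_add_one₀ (ne_of_gt h0)]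
    ring_nf
    exact le_refl _
  · have hE' : ¬ Ev T (T x) := not_ev_T T hE
    rw [hf, hf, dif_neg hE, dif_neg hE', nu_T T hper hE, zpow_add_one₀ (ne_of_gt h0)]
    ring_nf
    exact le_refl _

end Stmt13

theorem stmt_13 {X : Type*} [Nonempty X] (T : X → X)
    (hA : {x : X | T x = x}.Nonempty)
    (hcard : Cardinal.mk {x : X // T x = x} ≤ Cardinal.continuum)
    (hper : ∀ x : X, T x ≠ x → ∀ n : ℕ, 1 ≤ n → T^[n] x ≠ x)
    (α : ℝ) (hα : α ∈ Set.Ioo (0 : ℝ) 1) :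
    ∃ p : X → X → ℝ, IsPartialMetric p ∧ PMZeroComplete p ∧
      ∀ x y : X, p (T x) (T y) ≤ max (α * p x y) (max (p x x) (p y y)) := by
  classical
  obtain ⟨h0, h1⟩ := hα
  have hψ : Nonempty ({x : X // T x = x} ↪ ℝ) := by
    rw [← Cardinal.lift_mk_le']
    rw [Cardinal.mk_real, Cardinal.lift_continuum]
    simpa using hcard
  obtain ⟨ψ⟩ := hψ
  set hf := Stmt13.hf T α with hhf
  have hfpos : ∀ x, 0 < hf x := Stmt13.hf_pos T h0
  have hfT : ∀ x : X, T (T x) ≠ T x → hf (T x) ≤ α * hf x :=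
    fun x hx => Stmt13.hf_T T hper h0 h1 hx
  set w : X → ℝ := fun x => if hx : T x = x then 3/2 + Real.arctan (ψ ⟨x, hx⟩) / 4
    else 2 + hf x with hw
  set H : X → ℝ := fun x => if T x = x then 0 else hf x with hH
  set p : X → X → ℝ := fun x y => if x = y then w x
    else max (w x) (w y) + (1 - α) * max (H x) (H y) with hp
  have pi4 : Real.pi < 4 := Real.pi_lt_four
  have harctan : ∀ t : ℝ, -1/2 < Real.arctan t / 4 ∧ Real.arctan t / 4 < 1/2 := by
    intro t
    have h1 := Real.arctan_lt_pi_div_two t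
    have h2 := Real.neg_pi_div_two_lt_arctan t
    constructor <;> nlinarith [Real.pi_pos]
  have hwfix : ∀ x (hx : T x = x), w x = 3/2 + Real.arctan (ψ ⟨x, hx⟩) / 4 := by
    intro x hx
    simp only [hw]
    rw [dif_pos hx]
  have hHfix : ∀ x, T x = x → H x = 0 := by
    intro x hx
    simp only [hH]
    rw [if_pos hx]
  have hHne : ∀ x, T x ≠ x → H x = hf x := by
    intro x hx
    simp only [hH]
    rw [if_neg hx]
  have hwne : ∀ x, T x ≠ x → w x = 2 + H x := by
    intro x hx
    rw [hHne x hx]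
    simp only [hw]
    rw [dif_neg hx]
  have hw1 : ∀ x, 1 ≤ w x := by
    intro x
    by_cases hx : T x = x
    · rw [hwfix x hx]
      rcases harctan (ψ ⟨x, hx⟩) with ⟨hl, _⟩
      linarith
    · rw [hwne x hx, hHne x hx]
      linarith [hfpos x]
  have hw2 : ∀ x, T x = x → w x < 2 := by
    intro x hx
    rw [hwfix x hx]
    rcases harctan (ψ ⟨x, hx⟩) with ⟨_, hr⟩
    linarith
  have hH0 : ∀ x, 0 ≤ H x := by
    intro x
    by_cases hx : T x = x
    · rw [hHfix x hx]
    · rw [hHne x hx]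
      exact (hfpos x).le
  have hHzero : ∀ x, H x = 0 → T x = x := by
    intro x hx
    by_contra hc
    rw [hHne x hc] at hx
    exact (hfpos x).ne' hx
  have hwinj : ∀ x y, T x = x → T y = y → w x = w y → x = y := by
    intro x y hx hy hxy
    rw [hwfix x hx, hwfix y hy] at hxy
    have h2 : Real.arctan (ψ ⟨x, hx⟩) = Real.arctan (ψ ⟨y, hy⟩) := by linarith
    have := ψ.injective (Real.arctan_injective h2)
    exact congrArg Subtype.val this
  have hHT : ∀ x, H (T x) ≤ α * H x := by
    intro x
    by_cases hTx : T (T x) = T x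
    · rw [hHfix _ hTx]
      exact mul_nonneg h0.le (hH0 x)
    · have hx : T x ≠ x := fun h => hTx (by rw [h]; exact h)
      rw [hHne _ hTx, hHne x hx]
      exact hfT x hTx
  have hwT2 : ∀ x, w (T x) ≤ 2 + α * H x := by
    intro x
    by_cases hTx : T (T x) = T x
    · have := hw2 _ hTx
      have := mul_nonneg h0.le (hH0 x)
      linarith
    · have hx : T x ≠ x := fun h => hTx (by rw [h]; exact h)
      rw [hwne _ hTx, hHne _ hTx, hHne x hx]
      have := hfT x hTx
      linarith
  have hwT : ∀ x, w (T x) ≤ w x := by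
    intro x
    by_cases hx : T x = x
    · rw [hx]
    · have h2 := hwT2 x
      rw [hHne x hx] at h2
      rw [hwne x hx, hHne x hx]
      nlinarith [hfpos x]
  have hpeq : ∀ x, p x x = w x := by
    intro x
    simp [hp]
  have hpne : ∀ x y, x ≠ y → p x y = max (w x) (w y) + (1 - α) * max (H x) (H y) := by
    intro x y hxy
    simp [hp, hxy]
  have hpge : ∀ x y, max (w x) (w y) ≤ p x y := by
    intro x y
    rcases eq_or_ne x y with rfl | hne
    · rw [hpeq, max_self]
    · rw [hpne x y hne]
      have := mul_nonneg (by linarith : (0:ℝ) ≤ 1 - α)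
        (le_max_of_le_left (hH0 x) : (0:ℝ) ≤ max (H x) (H y))
      linarith
  have hp1 : ∀ x y, 1 ≤ p x y :=
    fun x y => le_trans (le_trans (hw1 x) (le_max_left _ _)) (hpge x y)
  refine ⟨p, ⟨?_, ?_, ?_, ?_, ?_⟩, ?_, ?_⟩
  · intro x y; linarith [hp1 x y]
  · intro x y
    constructor
    · rintro rfl; exact ⟨rfl, rfl⟩
    · rintro ⟨e1, e2⟩
      by_contra hne
      rw [hpeq x, hpne x y hne] at e1
      rw [hpne x y hne, hpeq y] at e2
      have hwxy : w x = w y := by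
        have hx' : w x ≤ max (w x) (w y) := le_max_left _ _
        have hy' : w y ≤ max (w x) (w y) := le_max_right _ _
        have hnn := mul_nonneg (by linarith : (0:ℝ) ≤ 1 - α)
          (le_max_of_le_left (hH0 x) : (0:ℝ) ≤ max (H x) (H y))
        have hmx : max (w x) (w y) ≤ w x := by linarith
        have hmy : max (w x) (w y) ≤ w y := by linarith
        linarith
      have hM : (1 - α) * max (H x) (H y) = 0 := by
        rw [hwxy, max_self] at e1
        linarith
      have hM0 : max (H x) (H y) = 0 := by
        rcases mul_eq_zero.1 hM with h | h
        · exfalso; linarith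
        · exact h
      have hx0 : H x = 0 := le_antisymm (hM0 ▸ le_max_left _ _) (hH0 x)
      have hy0 : H y = 0 := le_antisymm (hM0 ▸ le_max_right _ _) (hH0 y)
      exact hne (hwinj x y (hHzero x hx0) (hHzero y hy0) hwxy)
  · intro x y
    rw [hpeq x]
    exact le_trans (le_max_right _ _) (hpge y x)
  · intro x y
    rcases eq_or_ne x y with rfl | hne
    · rfl
    · rw [hpne x y hne, hpne y x hne.symm, max_comm (w x), max_comm (H x)]
  · intro x y z
    rcases eq_or_ne x y with rfl | hxy
    · have hh1 : w x ≤ p x z := le_trans (le_max_left _ _) (hpge x z)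
      have hh2 : w z ≤ p z x := le_trans (le_max_left _ _) (hpge z x)
      rw [hpeq x, hpeq z]
      linarith
    rcases eq_or_ne z x with rfl | hzx
    · rw [hpeq z]
      linarith
    rcases eq_or_ne z y with rfl | hzy
    · rw [hpeq z]
      linarith
    · rw [hpne x y hxy, hpne x z (Ne.symm hzx), hpne z y hzy, hpeq z]
      have ha : max (w x) (w y) + w z ≤ max (w x) (w z) + max (w z) (w y) := by
        have c1 : w x ≤ max (w x) (w z) := le_max_left _ _
        have c2 : w z ≤ max (w z) (w y) := le_max_left _ _
        have c3 : w y ≤ max (w z) (w y) := le_max_right _ _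
        have c4 : w z ≤ max (w x) (w z) := le_max_right _ _
        have : max (w x) (w y) ≤ max (w x) (w z) + max (w z) (w y) - w z :=
          max_le (by linarith) (by linarith)
        linarith
      have hb : max (H x) (H y) ≤ max (H x) (H z) + max (H z) (H y) := by
        have c1 : H x ≤ max (H x) (H z) := le_max_left _ _
        have c2 : H y ≤ max (H z) (H y) := le_max_right _ _
        have c3 : (0:ℝ) ≤ max (H z) (H y) := le_max_of_le_left (hH0 z)
        have c4 : (0:ℝ) ≤ max (H x) (H z) := le_max_of_le_left (hH0 x)
        exact max_le (by linarith) (by linarith)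
      have hb' : (1 - α) * max (H x) (H y) ≤
          (1 - α) * (max (H x) (H z) + max (H z) (H y)) :=
        mul_le_mul_of_nonneg_left hb (by linarith)
      nlinarith
  · -- zero completeness: vacuous since p ≥ 1
    intro u hu
    have : (1 : ℝ) ≤ 0 := ge_of_tendsto hu (Eventually.of_forall fun mn => hp1 _ _)
    linarith
  · -- contraction
    intro x y
    have key : p (T x) (T y) ≤ max (w x) (w y) := by
      rcases eq_or_ne (T x) (T y) with hT | hT
      · rw [hT, hpeq]
        exact le_trans (hwT y) (le_max_right _ _)
      · rw [hpne _ _ hT]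
        have hMx : H x ≤ max (H x) (H y) := le_max_left _ _
        have hMy : H y ≤ max (H x) (H y) := le_max_right _ _
        rcases eq_or_lt_of_le (le_max_of_le_left (hH0 x) :
            (0:ℝ) ≤ max (H x) (H y)) with hM0 | hM0
        · have hx0 : H x = 0 := le_antisymm (hM0 ▸ hMx) (hH0 x)
          have hy0 : H y = 0 := le_antisymm (hM0 ▸ hMy) (hH0 y)
          have hxf := hHzero x hx0
          have hyf := hHzero y hy0
          rw [hxf, hyf, hx0, hy0]
          simp
        · set M := max (H x) (H y) with hM
          have b1 : w (T x) ≤ 2 + α * M := le_trans (hwT2 x) (by nlinarith)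
          have b2 : w (T y) ≤ 2 + α * M := le_trans (hwT2 y) (by nlinarith)
          have b3 : max (H (T x)) (H (T y)) ≤ α * M :=
            max_le (le_trans (hHT x) (by nlinarith)) (le_trans (hHT y) (by nlinarith))
          have b4 : max (w (T x)) (w (T y)) ≤ 2 + α * M := max_le b1 b2
          have b5 : 2 + M ≤ max (w x) (w y) := by
            rcases max_cases (H x) (H y) with ⟨he, _⟩ | ⟨he, _⟩
            · have hx : T x ≠ x := by
                intro h
                rw [hM, he, hHfix x h] at hM0
                exact lt_irrefl _ hM0
              calc 2 + M = 2 + H x := by rw [hM, he]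
                _ = w x := (hwne x hx).symm
                _ ≤ max (w x) (w y) := le_max_left _ _
            · have hy : T y ≠ y := by
                intro h
                rw [hM, he, hHfix y h] at hM0
                exact lt_irrefl _ hM0
              calc 2 + M = 2 + H y := by rw [hM, he]
                _ = w y := (hwne y hy).symm
                _ ≤ max (w x) (w y) := le_max_right _ _
          have hcomb : max (w (T x)) (w (T y)) + (1 - α) * max (H (T x)) (H (T y))
              ≤ 2 + α * M + (1 - α) * (α * M) := by
            have := mul_le_mul_of_nonneg_left b3 (by linarith : (0:ℝ) ≤ 1 - α)
            linarith
          have hfin : 2 + α * M + (1 - α) * (α * M) ≤ 2 + M := by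
            nlinarith [sq_nonneg (1 - α)]
          linarith
    calc p (T x) (T y) ≤ max (w x) (w y) := key
      _ ≤ max (p x x) (p y y) := by rw [hpeq x, hpeq y]
      _ ≤ max (α * p x y) (max (p x x) (p y y)) := le_max_right _ _
end

section
/- Assume the continuum hypothesis. Let X be a nonempty set and T : X → X a map whose set A of fixed points is nonempty of cardinality at most continuum, and such that x ≠ Tⁿ(x) for all n ≥ 1 and all x ∉ A. Then for each α ∈ (0,1) there exists a partial metric p on X such that (X,p) is a complete partial metric space and p(T(x),T(y)) ≤ max{α·p(x,y), p(x,x), p(y,y)} for all x, y ∈ X. -/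
open Filter Topology

/-!
Label the fixed points injectively by reals in `[0, 1]` so that the set of labels is closed and
contains `0`: under CH the fixed-point set is countable (use labels in `{0} ∪ {1/(n+1)}`) or
has size `𝔠` (use all of `[0, 1]`). Since `T` has no periodic points other than fixed points,
there is a height `h : X → ℤ` vanishing on fixed points with `h (T x) = h x - 1` elsewhere: the
hitting time of the fixed-point set where it is hit, otherwise the grading of the grand orbit
relative to a base point. Let `φ` be the label on fixed points and `α ^ (-h)` elsewhere, so that
`φ (T x) ≤ α φ x` off the fixed points, and put `p x y = max (φ x) (φ y)` for `x ≠ y` and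
`p x x = φ (T x)`. The partial-metric axioms and the contraction property only use `φ ∘ T ≤ φ`,
with equality exactly on the fixed points, where `φ` is injective. A Cauchy sequence that does
not stabilise has `φ (u n)` tending to its limit `a`, and `a` is a label: otherwise, the labels
being closed, eventually no `u n` is fixed, so `a ≤ α a` forces `a = 0`, which is a label.
-/

open Function Set Cardinal

universe u

variable {X : Type*}

section MaxPartialMetric

open Classical in
noncomputable def maxPartialMetric (ψ φ : X → ℝ) (x y : X) : ℝ :=
  if x = y then ψ x else max (φ x) (φ y)

variable {ψ φ : X → ℝ}

lemma maxPartialMetric_self (x : X) : maxPartialMetric ψ φ x x = ψ x := if_pos rfl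

lemma maxPartialMetric_of_ne {x y : X} (h : x ≠ y) :
    maxPartialMetric ψ φ x y = max (φ x) (φ y) := if_neg h

lemma maxPartialMetric_comm (x y : X) :
    maxPartialMetric ψ φ x y = maxPartialMetric ψ φ y x := by
  rcases eq_or_ne x y with rfl | h
  · rfl
  · rw [maxPartialMetric_of_ne h, maxPartialMetric_of_ne h.symm, max_comm]

lemma maxPartialMetric_le_max (hψφ : ∀ x, ψ x ≤ φ x) (x y : X) :
    maxPartialMetric ψ φ x y ≤ max (φ x) (φ y) := by
  rcases eq_or_ne x y with rfl | h
  · simpa [maxPartialMetric_self] using hψφ x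
  · rw [maxPartialMetric_of_ne h]

lemma maxPartialMetric_self_le (hψφ : ∀ x, ψ x ≤ φ x) (x y : X) :
    ψ x ≤ maxPartialMetric ψ φ y x := by
  rcases eq_or_ne y x with rfl | h
  · rw [maxPartialMetric_self]
  · rw [maxPartialMetric_of_ne h]
    exact (hψφ x).trans (le_max_right _ _)

theorem isPartialMetric_maxPartialMetric (hψ : ∀ x, 0 ≤ ψ x) (hψφ : ∀ x, ψ x ≤ φ x)
    (hinj : InjOn φ {x | ψ x = φ x}) : IsPartialMetric (maxPartialMetric ψ φ) := by
  refine ⟨fun x y => (hψ y).trans (maxPartialMetric_self_le hψφ y x), fun x y => ?_,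
    fun x y => by simpa [maxPartialMetric_self] using maxPartialMetric_self_le hψφ x y,
    maxPartialMetric_comm, fun x y z => ?_⟩
  · refine ⟨by rintro rfl; simp, fun ⟨hx, hy⟩ => by_contra fun hxy => hxy ?_⟩
    rw [maxPartialMetric_self, maxPartialMetric_of_ne hxy] at hx
    rw [maxPartialMetric_self, maxPartialMetric_of_ne hxy] at hy
    have hx' : ψ x = φ x := le_antisymm (hψφ x) (hx ▸ le_max_left _ _)
    have hy' : ψ y = φ y := le_antisymm (hψφ y) (hy ▸ le_max_right _ _)
    exact hinj hx' hy' (by rw [← hx', ← hy', hx, hy])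
  · rcases eq_or_ne z x with rfl | hzx
    · simp [maxPartialMetric_self]
    rcases eq_or_ne z y with rfl | hzy
    · simp [maxPartialMetric_self]
    rw [maxPartialMetric_of_ne hzx.symm, maxPartialMetric_of_ne hzy, maxPartialMetric_self]
    refine (maxPartialMetric_le_max hψφ x y).trans (max_le ?_ ?_) <;>
      linarith [hψφ z, le_max_left (φ x) (φ z), le_max_right (φ x) (φ z),
        le_max_left (φ z) (φ y), le_max_right (φ z) (φ y)]

theorem pmComplete_maxPartialMetric (hψφ : ∀ x, ψ x ≤ φ x)
    (hlim : ∀ (u : ℕ → X) (a : ℝ), Tendsto (ψ ∘ u) atTop (𝓝 a) →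
      Tendsto (φ ∘ u) atTop (𝓝 a) → ∃ x, ψ x = a ∧ φ x = a) :
    PMComplete (maxPartialMetric ψ φ) := by
  intro u a hu
  have hψu : Tendsto (ψ ∘ u) atTop (𝓝 a) := by
    simpa [Function.comp_def, maxPartialMetric_self] using hu.comp tendsto_atTop_diagonal
  by_cases hconst : ∃ x, ∀ᶠ n in atTop, u n = x
  · obtain ⟨x, hx⟩ := hconst
    exact ⟨x, tendsto_const_nhds.congr' (hx.mono fun n hn => by simp only [hn]),
      tendsto_const_nhds.congr' (hx.mono fun n hn => by simp only [hn])⟩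
  push Not at hconst
  choose m hm hne using fun N => (hconst (u N)).forall_exists_of_atTop N
  have hφu : Tendsto (φ ∘ u) atTop (𝓝 a) := by
    have hmt : Tendsto (fun N => (N, m N)) atTop atTop := by
      rw [← prod_atTop_atTop_eq]
      exact tendsto_id.prodMk (tendsto_atTop_mono hm tendsto_id)
    refine tendsto_of_tendsto_of_tendsto_of_le_of_le hψu (hu.comp hmt) (fun n => hψφ (u n))
      fun N => ?_
    simp only [Function.comp_apply, maxPartialMetric_of_ne (hne N).symm]
    exact le_max_left _ _
  obtain ⟨x, hψx, hφx⟩ := hlim u a hψu hφu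
  refine ⟨x, ?_, ?_⟩ <;> rw [maxPartialMetric_self, hψx]
  · have hmax : Tendsto (fun n => max (φ (u n)) (φ x)) atTop (𝓝 a) := by
      simpa [hφx] using hφu.max (tendsto_const_nhds (x := φ x))
    exact tendsto_of_tendsto_of_tendsto_of_le_of_le tendsto_const_nhds hmax
      (fun n => hψx ▸ maxPartialMetric_self_le hψφ x (u n))
      (fun n => maxPartialMetric_le_max hψφ (u n) x)
  · simp only [maxPartialMetric_self]
    exact hψu

theorem exists_eq_of_tendsto_of_isClosed {α : ℝ} (hα : α < 1) (hψ : ∀ x, 0 ≤ ψ x)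
    (hψα : ∀ x, ψ x ≠ φ x → ψ x ≤ α * φ x) (hclosed : IsClosed (φ '' {x | ψ x = φ x}))
    (hzero : 0 ∈ φ '' {x | ψ x = φ x}) {u : ℕ → X} {a : ℝ}
    (hψu : Tendsto (ψ ∘ u) atTop (𝓝 a)) (hφu : Tendsto (φ ∘ u) atTop (𝓝 a)) :
    ∃ x, ψ x = a ∧ φ x = a := by
  suffices ha : a ∈ φ '' {x | ψ x = φ x} by
    obtain ⟨x, hx, rfl⟩ := ha
    exact ⟨x, hx, rfl⟩
  by_contra ha
  have hoff : ∀ᶠ n in atTop, ψ (u n) ≤ α * φ (u n) :=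
    (hφu.eventually_mem (hclosed.isOpen_compl.mem_nhds ha)).mono fun n hn =>
      hψα (u n) fun h => hn ⟨u n, h, rfl⟩
  have haα : a ≤ α * a := le_of_tendsto_of_tendsto hψu (hφu.const_mul α) hoff
  have ha₀ : 0 ≤ a := ge_of_tendsto' hψu fun n => hψ (u n)
  exact ha (by rwa [show a = 0 by nlinarith])

theorem maxPartialMetric_apply_le {T : X → X} {α : ℝ} (hα : 0 ≤ α)
    (hψT : ∀ x, ψ (T x) ≤ ψ x) (hφT : ∀ x, φ (T x) ≤ max (α * φ x) (ψ x)) (x y : X) :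
    maxPartialMetric ψ φ (T x) (T y) ≤
      max (α * maxPartialMetric ψ φ x y)
        (max (maxPartialMetric ψ φ x x) (maxPartialMetric ψ φ y y)) := by
  rw [maxPartialMetric_self, maxPartialMetric_self]
  by_cases hT : T x = T y
  · rw [hT, maxPartialMetric_self]
    exact le_max_of_le_right ((hψT y).trans (le_max_right _ _))
  have hxy : x ≠ y := fun h => hT (congrArg T h)
  rw [maxPartialMetric_of_ne hT, maxPartialMetric_of_ne hxy]
  have hmono : ∀ z w, max (α * φ z) (ψ z) ≤ max (α * max (φ z) (φ w)) (max (ψ z) (ψ w)) :=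
    fun z w => max_le_max (mul_le_mul_of_nonneg_left (le_max_left _ _) hα) (le_max_left _ _)
  refine max_le ((hφT x).trans (hmono x y)) ((hφT y).trans ((hmono y x).trans_eq ?_))
  rw [max_comm (φ y), max_comm (ψ y)]

end MaxPartialMetric

theorem exists_partialMetric_of_level {T : X → X} {α : ℝ} (hα₀ : 0 ≤ α) (hα₁ : α < 1)
    {φ : X → ℝ} (hφ₀ : ∀ x ∈ fixedPoints T, 0 ≤ φ x) (hφpos : ∀ x, ¬IsFixedPt T x → 0 < φ x)
    (hφT : ∀ x, ¬IsFixedPt T x → φ (T x) ≤ α * φ x) (hinj : InjOn φ (fixedPoints T))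
    (hclosed : IsClosed (φ '' fixedPoints T)) (hzero : 0 ∈ φ '' fixedPoints T) :
    ∃ p : X → X → ℝ, IsPartialMetric p ∧ PMComplete p ∧
      ∀ x y : X, p (T x) (T y) ≤ max (α * p x y) (max (p x x) (p y y)) := by
  have hφ : ∀ x, 0 ≤ φ x := fun x => by
    by_cases hx : IsFixedPt T x
    exacts [hφ₀ x hx, (hφpos x hx).le]
  have hφTle : ∀ x, φ (T x) ≤ φ x := fun x => by
    by_cases hx : IsFixedPt T x
    · rw [hx.eq]
    · exact (hφT x hx).trans (mul_le_of_le_one_left (hφ x) hα₁.le)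
  have hdiag : {x | (φ ∘ T) x = φ x} = fixedPoints T := by
    ext x
    refine ⟨fun h => by_contra fun hx => ?_, fun hx => congrArg φ hx⟩
    linarith [h.symm.trans_le (hφT x hx), mul_lt_of_lt_one_left (hφpos x hx) hα₁]
  refine ⟨maxPartialMetric (φ ∘ T) φ,
    isPartialMetric_maxPartialMetric (fun x => hφ (T x)) hφTle (hdiag ▸ hinj),
    pmComplete_maxPartialMetric hφTle fun u a =>
      exists_eq_of_tendsto_of_isClosed hα₁ (fun x => hφ (T x))
        (fun x hx => hφT x fun hfix => hx (congrArg φ hfix)) (hdiag ▸ hclosed) (hdiag ▸ hzero),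
    maxPartialMetric_apply_le hα₀ (fun x => hφTle (T x)) fun x => le_max_right _ _⟩

section Height

def ReachesFixedPt (T : X → X) (x : X) : Prop := ∃ n, IsFixedPt T (T^[n] x)

def grandOrbitSetoid (T : X → X) : Setoid X where
  r x y := ∃ m n : ℕ, T^[m] x = T^[n] y
  iseqv := ⟨fun _ => ⟨0, 0, rfl⟩, fun ⟨m, n, h⟩ => ⟨n, m, h.symm⟩,
    fun ⟨m, n, h⟩ ⟨m', n', h'⟩ => ⟨m' + m, n + n', by
      rw [iterate_add_apply, h, ← iterate_add_apply, Nat.add_comm m' n, iterate_add_apply, h',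
        ← iterate_add_apply]⟩⟩

lemma sub_eq_sub_of_iterate_eq {T : X → X} {x y : X} (hx : Injective fun n => T^[n] x)
    {m n m' n' : ℕ} (h : T^[m] x = T^[n] y) (h' : T^[m'] x = T^[n'] y) : (m : ℤ) - n = m' - n' := by
  have : n' + m = n + m' := hx (show T^[n' + m] x = T^[n + m'] x by
    rw [iterate_add_apply, h, ← iterate_add_apply, Nat.add_comm n' n, iterate_add_apply, ← h',
      ← iterate_add_apply])
  omega

theorem exists_grading (T : X → X) :
    ∃ d : X → ℤ, ∀ x, (Injective fun n => T^[n] x) → d (T x) = d x - 1 := by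
  let base : X → X := fun x => (⟦x⟧ : Quotient (grandOrbitSetoid T)).out
  choose m n hmn using fun x => (grandOrbitSetoid T).iseqv.symm (Quotient.mk_out x)
  refine ⟨fun x => m x - n x, fun x hx => ?_⟩
  have hbase : base (T x) = base x :=
    congrArg Quotient.out (Quotient.sound (s := grandOrbitSetoid T) ⟨0, 1, rfl⟩)
  have hTx : T^[m (T x) + 1] x = T^[n (T x)] (base x) := by
    rw [iterate_succ_apply, ← hbase]
    exact hmn (T x)
  have hsub := sub_eq_sub_of_iterate_eq hx (hmn x) hTx
  push_cast at hsub
  linarith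

variable {T : X → X}

lemma reachesFixedPt_apply_iff {x : X} : ReachesFixedPt T (T x) ↔ ReachesFixedPt T x :=
  ⟨fun ⟨n, hn⟩ => ⟨n + 1, hn⟩, fun ⟨n, hn⟩ => ⟨n, by
    rw [← iterate_succ_apply, iterate_succ_apply']
    exact hn.apply⟩⟩

lemma injective_iterate_of_not_reachesFixedPt
    (hper : ∀ x : X, T x ≠ x → ∀ n : ℕ, 1 ≤ n → T^[n] x ≠ x) {x : X}
    (hx : ¬ReachesFixedPt T x) : Injective fun n => T^[n] x := by
  intro a b hab
  by_contra hne
  wlog hlt : a < b generalizing a b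
  · exact this hab.symm (Ne.symm hne) (lt_of_le_of_ne (not_lt.mp hlt) (Ne.symm hne))
  refine hper (T^[a] x) (fun h => hx ⟨a, h⟩) (b - a) (by omega) ?_
  rw [← iterate_add_apply, Nat.sub_add_cancel hlt.le]
  exact hab.symm

theorem exists_height (hper : ∀ x : X, T x ≠ x → ∀ n : ℕ, 1 ≤ n → T^[n] x ≠ x) :
    ∃ h : X → ℤ, (∀ x, IsFixedPt T x → h x = 0) ∧ ∀ x, ¬IsFixedPt T x → h (T x) = h x - 1 := by
  classical
  obtain ⟨d, hd⟩ := exists_grading T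
  refine ⟨fun x => if hx : ReachesFixedPt T x then Nat.find hx else d x, fun x hx => ?_,
    fun x hx => ?_⟩
  · dsimp only
    rw [dif_pos ⟨0, hx⟩, Nat.cast_eq_zero, Nat.find_eq_zero]
    exact hx
  by_cases hr : ReachesFixedPt T x
  · have hTr : ReachesFixedPt T (T x) := reachesFixedPt_apply_iff.mpr hr
    have hfind : Nat.find hr = Nat.find hTr + 1 := Nat.find_comp_succ hr hTr hx
    simp only [dif_pos hr, dif_pos hTr, hfind]
    push_cast
    ring
  · simp only [dif_neg hr, dif_neg (mt reachesFixedPt_apply_iff.mp hr)]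
    exact hd x (injective_iterate_of_not_reachesFixedPt hper hr)

theorem exists_level (hper : ∀ x : X, T x ≠ x → ∀ n : ℕ, 1 ≤ n → T^[n] x ≠ x) {α : ℝ}
    (hα : 0 < α) {g : X → ℝ} (hg : ∀ x ∈ fixedPoints T, g x ≤ 1) :
    ∃ φ : X → ℝ, EqOn φ g (fixedPoints T) ∧ (∀ x, ¬IsFixedPt T x → 0 < φ x) ∧
      ∀ x, ¬IsFixedPt T x → φ (T x) ≤ α * φ x := by
  classical
  obtain ⟨h, hfix, hstep⟩ := exists_height hper
  let φ : X → ℝ := fun x => if IsFixedPt T x then g x else α ^ (-h x)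
  have hφ : ∀ x, φ x ≤ α ^ (-h x) := fun x => by
    by_cases hx : IsFixedPt T x
    · simpa [φ, hx, hfix x hx] using hg x hx
    · simp [φ, hx]
  refine ⟨φ, fun x hx => if_pos hx, fun x hx => by simpa [φ, hx] using zpow_pos hα _,
    fun x hx => (hφ (T x)).trans_eq ?_⟩
  rw [hstep x hx, show -(h x - 1) = 1 + -h x by ring, zpow_add₀ hα.ne', zpow_one]
  simp [φ, hx]

end Height

section Labels

lemma countable_or_mk_eq_continuum
    (hCH : ∀ c : Cardinal.{u}, ℵ₀ < c → c ≤ 𝔠 → c = 𝔠) {A : Type u} (hA : #A ≤ 𝔠) :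
    Countable A ∨ #A = 𝔠 := by
  rcases le_or_gt #A ℵ₀ with h | h
  · exact .inl (mk_le_aleph0_iff.mp h)
  · exact .inr (hCH _ h hA)

theorem exists_injective_isClosed_range_of_countable (A : Type*) [Countable A] [Nonempty A] :
    ∃ g : A → ℝ, Injective g ∧ IsClosed (range g) ∧ 0 ∈ range g ∧ range g ⊆ Icc 0 1 := by
  classical
  obtain ⟨a₀⟩ := ‹Nonempty A›
  obtain ⟨e, he⟩ := Countable.exists_injective_nat A
  let g : A → ℝ := fun a => if a = a₀ then 0 else 1 / ((e a : ℝ) + 1)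
  have h₀ : 0 ∈ range g := ⟨a₀, if_pos rfl⟩
  have hlim : Tendsto g cofinite (𝓝 0) := by
    have he' : Tendsto e cofinite atTop := Nat.cofinite_eq_atTop ▸ he.tendsto_cofinite
    refine (tendsto_one_div_add_atTop_nhds_zero_nat.comp he').congr' ?_
    filter_upwards [(finite_singleton a₀).compl_mem_cofinite] with a ha
    exact (if_neg ha).symm
  refine ⟨g, fun a b hab => ?_, ?_, h₀, ?_⟩
  · by_cases ha : a = a₀ <;> by_cases hb : b = a₀
    · rw [ha, hb]
    · simp only [g, if_pos ha, if_neg hb] at hab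
      exact absurd hab.symm (by positivity)
    · simp only [g, if_neg ha, if_pos hb] at hab
      exact absurd hab (by positivity)
    · simp only [g, if_neg ha, if_neg hb, one_div, inv_inj, add_left_inj, Nat.cast_inj] at hab
      exact he hab
  · simpa [insert_eq_of_mem h₀] using hlim.isCompact_insert_range_of_cofinite.isClosed
  · rintro _ ⟨a, rfl⟩
    by_cases ha : a = a₀
    · simp [g, ha]
    · simp only [g, if_neg ha]
      exact ⟨by positivity, div_le_one_of_le₀ (by simp) (by positivity)⟩

theorem exists_injective_isClosed_range_of_mk_eq_continuum {A : Type*} (hA : #A = 𝔠) :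
    ∃ g : A → ℝ, Injective g ∧ IsClosed (range g) ∧ 0 ∈ range g ∧ range g ⊆ Icc 0 1 := by
  obtain ⟨e⟩ : Nonempty (A ≃ Icc (0 : ℝ) 1) := by
    rw [← lift_mk_eq', hA, mk_Icc_real zero_lt_one, lift_continuum, lift_continuum]
  have hrange : range (Subtype.val ∘ e) = Icc 0 1 := by
    rw [range_comp, e.range_eq_univ, image_univ, Subtype.range_coe]
  refine ⟨Subtype.val ∘ e, Subtype.val_injective.comp e.injective, ?_, ?_, hrange.subset⟩ <;>
    rw [hrange]
  exacts [isClosed_Icc, left_mem_Icc.mpr zero_le_one]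

theorem exists_injOn_isClosed_image
    (hCH : ∀ c : Cardinal.{u}, ℵ₀ < c → c ≤ 𝔠 → c = 𝔠) {X : Type u} {s : Set X}
    (hs : s.Nonempty) (hcard : #s ≤ 𝔠) :
    ∃ g : X → ℝ, InjOn g s ∧ IsClosed (g '' s) ∧ 0 ∈ g '' s ∧ g '' s ⊆ Icc 0 1 := by
  have := hs.to_subtype
  obtain ⟨g, hg⟩ := (countable_or_mk_eq_continuum hCH hcard).elim
    (fun _ => exists_injective_isClosed_range_of_countable s)
    exists_injective_isClosed_range_of_mk_eq_continuum
  refine ⟨extend Subtype.val g 0, ?_⟩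
  have hrestrict : s.domRestrict (extend Subtype.val g 0) = g :=
    funext (Subtype.val_injective.extend_apply g 0)
  rwa [injOn_iff_injective, ← range_domRestrict, hrestrict]

end Labels

theorem stmt_14_general {X : Type u}
    (hCH : ∀ c : Cardinal.{u}, Cardinal.aleph0 < c → c ≤ Cardinal.continuum →
      c = Cardinal.continuum)
    (T : X → X)
    (hA : {x : X | T x = x}.Nonempty)
    (hcard : Cardinal.mk {x : X // T x = x} ≤ Cardinal.continuum)
    (hper : ∀ x : X, T x ≠ x → ∀ n : ℕ, 1 ≤ n → T^[n] x ≠ x)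
    (α : ℝ) (hα : α ∈ Set.Ioo (0 : ℝ) 1) :
    ∃ p : X → X → ℝ, IsPartialMetric p ∧ PMComplete p ∧
      ∀ x y : X, p (T x) (T y) ≤ max (α * p x y) (max (p x x) (p y y)) := by
  obtain ⟨g, hinj, hclosed, hzero, hunit⟩ :=
    exists_injOn_isClosed_image (s := fixedPoints T) hCH hA hcard
  obtain ⟨φ, hφg, hφpos, hφT⟩ :=
    exists_level hper hα.1 fun x hx => (hunit (mem_image_of_mem g hx)).2
  rw [← hφg.image_eq] at hclosed hzero hunit
  exact exists_partialMetric_of_level hα.1.le hα.2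
    (fun x hx => (hunit (mem_image_of_mem φ hx)).1) hφpos hφT (hφg.injOn_iff.mpr hinj)
    hclosed hzero

theorem stmt_14 {X : Type u} [Nonempty X]
    (hCH : ∀ c : Cardinal.{u}, Cardinal.aleph0 < c → c ≤ Cardinal.continuum →
      c = Cardinal.continuum)
    (T : X → X)
    (hA : {x : X | T x = x}.Nonempty)
    (hcard : Cardinal.mk {x : X // T x = x} ≤ Cardinal.continuum)
    (hper : ∀ x : X, T x ≠ x → ∀ n : ℕ, 1 ≤ n → T^[n] x ≠ x)
    (α : ℝ) (hα : α ∈ Set.Ioo (0 : ℝ) 1) :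
    ∃ p : X → X → ℝ, IsPartialMetric p ∧ PMComplete p ∧
      ∀ x y : X, p (T x) (T y) ≤ max (α * p x y) (max (p x x) (p y y)) :=
  stmt_14_general hCH T hA hcard hper α hα
end

section
/- Let (A,p) be a complete partial metric space satisfying p(x,y) ≤ max{p(x,x), p(y,y)} for all x, y ∈ A. Then the image f(A) of the map f(x) := p(x,x) is a closed subset of ℝ. -/
open Filter Topology

theorem stmt_16 {A : Type*} (p : A → A → ℝ) (hp : IsPartialMetric p)
    (hcomplete : PMComplete p)
    (hmax : ∀ x y : A, p x y ≤ max (p x x) (p y y)) :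
    IsClosed (Set.range (fun x : A => p x x)) := by
  apply IsSeqClosed.isClosed
  intro s a hs hsa
  choose u hu using hs
  have key : ∀ x y : A, p x y = max (p x x) (p y y) := by
    intro x y
    refine le_antisymm (hmax x y) (max_le ?_ ?_)
    · calc p x x ≤ p y x := hp.2.2.1 x y
        _ = p x y := hp.2.2.2.1 y x
    · exact hp.2.2.1 y x
  have huu : Tendsto (fun n => p (u n) (u n)) atTop (𝓝 a) := by
    simpa only [hu] using hsa
  have hc : PMCauchyTo p u a := by
    unfold PMCauchyTo
    rw [show (atTop : Filter (ℕ × ℕ)) = atTop ×ˢ atTop from prod_atTop_atTop_eq.symm]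
    have h1 : Tendsto (fun mn : ℕ × ℕ => p (u mn.1) (u mn.1)) (atTop ×ˢ atTop) (𝓝 a) :=
      huu.comp tendsto_fst
    have h2 : Tendsto (fun mn : ℕ × ℕ => p (u mn.2) (u mn.2)) (atTop ×ˢ atTop) (𝓝 a) :=
      huu.comp tendsto_snd
    have h3 := h1.max h2
    simp only [max_self] at h3
    convert h3 using 2 with mn
    exact key _ _
  obtain ⟨x, hx1, hx2⟩ := hcomplete u a hc
  exact ⟨x, (tendsto_nhds_unique huu hx2).symm⟩
end

section
/- Let (A,p) be a complete partial metric space satisfying p(x,y) ≤ max{p(x,x), p(y,y)} for all x, y ∈ A. If card(A) > ℵ₀ and card(A) ≤ 2^ℵ₀, then card(A) = 2^ℵ₀. -/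
open Filter Topology

theorem stmt_17 {A : Type*} (p : A → A → ℝ) (hp : IsPartialMetric p)
    (hcomplete : PMComplete p)
    (hmax : ∀ x y : A, p x y ≤ max (p x x) (p y y))
    (h1 : Cardinal.aleph0 < Cardinal.mk A)
    (h2 : Cardinal.mk A ≤ Cardinal.continuum) :
    Cardinal.mk A = Cardinal.continuum := by
  obtain ⟨hnn, hsep, hsmall, hsym, htri⟩ := hp
  set f : A → ℝ := fun x => p x x with hf
  -- p x y = max (f x) (f y)
  have key : ∀ x y : A, p x y = max (f x) (f y) := by
    intro x y
    refine le_antisymm (hmax x y) (max_le ?_ ?_)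
    · exact (hsmall x y).trans_eq (hsym y x)
    · exact hsmall y x
  have hinj : Function.Injective f := by
    intro x y hxy
    have h1 : p x x = p x y := by rw [key x y, ← hxy, max_self]
    have h2 : p x y = p y y := by rw [key x y, hxy, max_self]
    exact (hsep x y).2 ⟨h1, h2⟩
  -- range f is closed
  have hclosed : IsClosed (Set.range f) := by
    rw [← isSeqClosed_iff_isClosed]
    intro s a hs hsa
    choose u hu using hs
    have hfu : Tendsto (fun n => f (u n)) atTop (𝓝 a) := by
      simpa only [hu] using hsa
    have hcau : PMCauchyTo p u a := by
      have hfst : Tendsto (Prod.fst : ℕ × ℕ → ℕ) atTop atTop :=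
        tendsto_fst.mono_left Filter.prod_atTop_atTop_eq.ge
      have hsnd : Tendsto (Prod.snd : ℕ × ℕ → ℕ) atTop atTop :=
        tendsto_snd.mono_left Filter.prod_atTop_atTop_eq.ge
      have h1 : Tendsto (fun mn : ℕ × ℕ => f (u mn.1)) atTop (𝓝 a) :=
        hfu.comp hfst
      have h2 : Tendsto (fun mn : ℕ × ℕ => f (u mn.2)) atTop (𝓝 a) :=
        hfu.comp hsnd
      have := h1.max h2
      rw [max_self] at this
      simpa only [PMCauchyTo, key] using this
    obtain ⟨x, _, hx2⟩ := hcomplete u a hcau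
    have : f x = a := tendsto_nhds_unique hx2 hfu
    exact ⟨x, this⟩
  -- range f is uncountable
  have huncount : ¬ (Set.range f).Countable := by
    intro hc
    have : (Set.univ : Set A).Countable := by
      have := (hc.preimage hinj)
      simpa [Set.preimage_range] using this
    rw [Set.countable_univ_iff] at this
    exact absurd (Cardinal.mk_le_aleph0 (α := A)) (not_le.mpr h1)
  obtain ⟨g, hgr, _, hginj⟩ :=
    hclosed.exists_nat_bool_injection_of_not_countable huncount
  refine le_antisymm h2 ?_
  have : Cardinal.continuum ≤ Cardinal.mk (Set.range f) := by
    have := Cardinal.mk_le_mk_of_subset hgr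
    have h3 : Cardinal.mk (Set.range g) = Cardinal.continuum := by
      rw [Cardinal.mk_range_eq _ hginj]
      simp [Cardinal.mk_arrow]
    rwa [h3] at this
  have hlift := Cardinal.mk_range_eq_lift.{_,_,0} hinj
  have := Cardinal.lift_le.{_,_}.mpr this
  rw [hlift, Cardinal.lift_continuum] at this
  simpa using this
end

section
/- The continuum hypothesis is equivalent to the statement: for every nonempty set A with card(A) ≤ 2^ℵ₀ there exists a partial metric p on A such that (A,p) is a complete partial metric space and p(x,y) ≤ max{p(x,x), p(y,y)} for all x, y ∈ A. -/
open Filter Topology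

universe u

lemma maxPM_aux {A : Type u} (w : A → ℝ) (hinj : Function.Injective w) (h0 : ∀ x, 0 ≤ w x)
    (hcl : IsClosed (Set.range w)) :
    IsPartialMetric (fun x y => max (w x) (w y)) ∧
      PMComplete (fun x y => max (w x) (w y)) ∧
      ∀ x y : A, max (w x) (w y) ≤ max (max (w x) (w x)) (max (w y) (w y)) := by
  refine ⟨⟨fun x y => le_trans (h0 x) (le_max_left _ _),
      fun x y => ?_, fun x y => ?_, fun x y => max_comm _ _, fun x y z => ?_⟩, ?_, ?_⟩
  · constructor
    · rintro rfl; simp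
    · rintro ⟨h1, h2⟩
      apply hinj
      simp only [max_self] at h1 h2
      rw [h1, h2]
  · simp only [max_self]; exact le_max_right _ _
  · dsimp only
    simp only [max_self]
    rcases le_total (w z) (max (w x) (w y)) with h | h
    · rcases le_total (w x) (w y) with hxy | hxy
      · rw [max_eq_right hxy]
        nlinarith [le_max_left (w x) (w z), le_max_right (w x) (w z),
          le_max_right (w z) (w y), le_max_left (w z) (w y)]
      · rw [max_eq_left hxy]
        nlinarith [le_max_left (w x) (w z), le_max_right (w z) (w y),
          le_max_left (w z) (w y)]
    · have hmz : max (w x) (w y) ≤ w z := h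
      nlinarith [le_max_right (w x) (w z), le_max_left (w z) (w y)]
  · -- completeness
    intro uSeq a hC
    have hdiag : Filter.Tendsto (fun n : ℕ => (n, n)) Filter.atTop
        (Filter.atTop : Filter (ℕ × ℕ)) := by
      rw [← Filter.prod_atTop_atTop_eq]
      exact Filter.tendsto_id.prodMk Filter.tendsto_id
    have hwa : Filter.Tendsto (fun n => w (uSeq n)) Filter.atTop (𝓝 a) := by
      have := hC.comp hdiag
      simpa only [Function.comp_def, max_self] using this
    have ha : a ∈ Set.range w := by
      rw [← hcl.closure_eq]
      exact mem_closure_of_tendsto hwa (Filter.Eventually.of_forall fun n => Set.mem_range_self _)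
    obtain ⟨x, rfl⟩ := ha
    refine ⟨x, ?_, ?_⟩
    · show Filter.Tendsto (fun n => max (w (uSeq n)) (w x)) Filter.atTop (𝓝 (max (w x) (w x)))
      have hcont : Filter.Tendsto (fun b : ℝ => max b (w x)) (𝓝 (w x)) (𝓝 (max (w x) (w x))) :=
        (continuous_id.max continuous_const).continuousAt
      exact hcont.comp hwa
    · show Filter.Tendsto (fun n => max (w (uSeq n)) (w (uSeq n))) Filter.atTop (𝓝 (max (w x) (w x)))
      simpa [max_self] using hwa
  · intro x y; simp

theorem stmt_18 :
    (∀ c : Cardinal.{u}, Cardinal.aleph0 < c → c ≤ Cardinal.continuum →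
        c = Cardinal.continuum) ↔
    (∀ A : Type u, Nonempty A → Cardinal.mk A ≤ Cardinal.continuum →
      ∃ p : A → A → ℝ, IsPartialMetric p ∧ PMComplete p ∧
        ∀ x y : A, p x y ≤ max (p x x) (p y y)) := by
  constructor
  · -- CH → partial metrics exist
    intro CH A hA hcard
    suffices h : ∃ w : A → ℝ, Function.Injective w ∧ (∀ x, 0 ≤ w x) ∧
        IsClosed (Set.range w) by
      obtain ⟨w, hinj, h0, hcl⟩ := h
      obtain ⟨h1, h2, h3⟩ := maxPM_aux w hinj h0 hcl
      exact ⟨fun x y => max (w x) (w y), h1, h2, h3⟩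
    rcases le_or_gt (Cardinal.mk A) Cardinal.aleph0 with hle | hlt
    · -- countable case: inject into ℕ
      have : Countable A := Cardinal.mk_le_aleph0_iff.mp hle
      obtain ⟨f, hf⟩ := exists_injective_nat A
      refine ⟨fun x => (f x : ℝ), fun a b hab => hf (Nat.cast_injective hab),
        fun x => by positivity, ?_⟩
      have : Set.range (fun x => ((f x : ℕ) : ℝ)) = ((↑) : ℕ → ℝ) '' (Set.range f) :=
        Set.range_comp _ f
      rw [this]
      exact Nat.isClosedEmbedding_coe_real.isClosedMap _ (isClosed_discrete _)
    · -- uncountable case: CH gives |A| = continuum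
      have hAc : Cardinal.mk A = Cardinal.continuum := CH _ hlt hcard
      have : Nonempty (A ≃ (Set.Icc (0:ℝ) 1)) := by
        rw [← Cardinal.lift_mk_eq']
        rw [hAc, Cardinal.mk_Icc_real (by norm_num : (0:ℝ) < 1)]
        simp [Cardinal.lift_continuum]
      obtain ⟨e⟩ := this
      refine ⟨fun x => (e x : ℝ), fun a b hab => e.injective (Subtype.ext hab),
        fun x => (e x).2.1, ?_⟩
      have : Set.range (fun x => ((e x : ℝ))) = Set.Icc (0:ℝ) 1 := by
        ext r
        constructor
        · rintro ⟨x, rfl⟩; exact (e x).2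
        · intro hr; exact ⟨e.symm ⟨r, hr⟩, by simp⟩
      rw [this]
      exact isClosed_Icc
  · -- partial metrics exist → CH
    intro H c hc1 hc2
    set A := c.out
    have hmkA : Cardinal.mk A = c := Cardinal.mk_out c
    have hnA : Nonempty A := by
      rw [← Cardinal.mk_ne_zero_iff, hmkA]
      exact (lt_of_le_of_lt (Cardinal.aleph0_pos).le hc1).ne'
    obtain ⟨p, ⟨hpos, hsep, hsmall, hsymm, htri⟩, hcomp, hmax⟩ :=
      H A hnA (hmkA ▸ hc2)
    set w : A → ℝ := fun x => p x x with hw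
    have hpeq : ∀ x y : A, p x y = max (w x) (w y) := by
      intro x y
      have h1 : w x ≤ p x y := (hsmall x y).trans_eq (hsymm y x)
      have h2 : w y ≤ p x y := hsmall y x
      exact le_antisymm (hmax x y) (max_le h1 h2)
    have hinj : Function.Injective w := by
      intro a b hab
      apply (hsep a b).mpr
      rw [hpeq a b, ← hab, max_self]
      exact ⟨rfl, hab⟩
    have hcl : IsClosed (Set.range w) := by
      rw [← isSeqClosed_iff_isClosed]
      intro s a hs hlim
      choose uSeq huSeq using hs
      have hwu : Filter.Tendsto (fun n => w (uSeq n)) Filter.atTop (𝓝 a) := by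
        simpa [huSeq] using hlim
      have hcauchy : PMCauchyTo p uSeq a := by
        unfold PMCauchyTo
        have hfst : Filter.Tendsto (fun mn : ℕ × ℕ => w (uSeq mn.1))
            (Filter.atTop : Filter (ℕ × ℕ)) (𝓝 a) := by
          rw [← Filter.prod_atTop_atTop_eq]
          exact hwu.comp Filter.tendsto_fst
        have hsnd : Filter.Tendsto (fun mn : ℕ × ℕ => w (uSeq mn.2))
            (Filter.atTop : Filter (ℕ × ℕ)) (𝓝 a) := by
          rw [← Filter.prod_atTop_atTop_eq]
          exact hwu.comp Filter.tendsto_snd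
        have : Filter.Tendsto (fun mn : ℕ × ℕ => max (w (uSeq mn.1)) (w (uSeq mn.2)))
            (Filter.atTop : Filter (ℕ × ℕ)) (𝓝 (max a a)) := hfst.max hsnd
        simpa [hpeq, max_self] using this
      obtain ⟨x, _, hconv2⟩ := hcomp uSeq a hcauchy
      have : Filter.Tendsto (fun n => w (uSeq n)) Filter.atTop (𝓝 (w x)) := by
        simpa [hpeq, max_self] using hconv2
      have hax : a = w x := tendsto_nhds_unique hwu this
      exact ⟨x, hax.symm⟩
    -- now range w is closed; cardinality argument
    have hrange : Cardinal.lift.{u} (Cardinal.mk (Set.range w)) = c := by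
      rw [Cardinal.mk_range_eq_of_injective hinj, hmkA, Cardinal.lift_uzero]
    have hunc : ¬ (Set.range w).Countable := by
      intro hcount
      have h1 : Cardinal.mk (Set.range w) ≤ Cardinal.aleph0 :=
        Cardinal.mk_le_aleph0_iff.mpr hcount.to_subtype
      have h2 : Cardinal.lift.{u} (Cardinal.mk (Set.range w)) ≤
          Cardinal.lift.{u} Cardinal.aleph0 := Cardinal.lift_le.mpr h1
      rw [hrange, Cardinal.lift_aleph0] at h2
      exact hc1.not_ge h2
    obtain ⟨f, hfr, _, hfinj⟩ := hcl.exists_nat_bool_injection_of_not_countable hunc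
    have hge : Cardinal.continuum ≤ Cardinal.mk (Set.range w) := by
      have : Cardinal.mk (ℕ → Bool) ≤ Cardinal.mk (Set.range w) :=
        ⟨⟨fun g => ⟨f g, hfr (Set.mem_range_self g)⟩,
          fun a b hab => hfinj (Subtype.ext_iff.mp hab)⟩⟩
      calc Cardinal.continuum = Cardinal.mk (ℕ → Bool) := by
            rw [Cardinal.mk_arrow]
            simp [Cardinal.mk_bool, Cardinal.two_power_aleph0]
        _ ≤ _ := this
    have hle : Cardinal.mk (Set.range w) ≤ Cardinal.continuum := by
      calc Cardinal.mk (Set.range w) ≤ Cardinal.mk ℝ := Cardinal.mk_set_le _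
        _ = Cardinal.continuum := Cardinal.mk_real
    have heq : Cardinal.mk (Set.range w) = Cardinal.continuum := le_antisymm hle hge
    rw [← hrange, heq, Cardinal.lift_continuum]
end
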